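/- (Theorem 3, moving-average case) For every event list L and every j ∈ Fin n, the averaged block of the folded memory equals the order-k moving average (with zero padding) of the event features sent to j: (1/k) · Σ_{r ∈ Fin k} s_L(j, r) = (1/k) · Σ_{x=0}^{k−1} e_j^{(M_j − x)}. -/

import Mathlib

/-- The shift-and-insert update: `shiftInsert s (j, e)` writes `e` into slot 0
of block `j`, shifts the previous contents of block `j` down by one slot
(discarding the last), and leaves all other blocks unchanged. -/
def shiftInsert {n k : ℕ} [NeZero k] (s : Fin n × Fin k → ℝ)
    (je : Fin n × ℝ) : Fin n × Fin k → ℝ := fun p =>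
  if p = (je.1, 0) then je.2
  else if p.1 = je.1 then s (je.1, p.2 - 1)
  else s p

/-- `sFold n k L` : the left fold of the shift-and-insert update over the
event list `L`, starting from the zero memory vector. -/
def sFold (n k : ℕ) [NeZero k] (L : List (Fin n × ℝ)) : Fin n × Fin k → ℝ :=
  L.foldl shiftInsert 0

/-- `countDest j L` : the number `M_j` of events in `L` with destination `j`. -/
def countDest {n : ℕ} (j : Fin n) (L : List (Fin n × ℝ)) : ℕ :=
  (L.filter fun ev => ev.1 = j).length

/-- `featAt j L l` : the feature `e_j^{(l)}` of the `l`-th event of `L` with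
destination `j` (1-indexed, in order of occurrence), with `e_j^{(0)} := 0`
(covering the convention `e_j^{(l)} := 0` for `l ≤ 0`, since natural
subtraction truncates at `0`). -/
def featAt {n : ℕ} (j : Fin n) (L : List (Fin n × ℝ)) : ℕ → ℝ
  | 0 => 0
  | l + 1 => ((L.filter fun ev => ev.1 = j).map Prod.snd).getD l 0


/-! Slot `r` of block `j` always holds the `r`-th most recent feature sent to `j` (zero if
fewer than `r + 1` were sent): an event for `j` shifts the block by one slot and raises `M_j`
by one, and any other event changes neither. Summing this over the slots gives the moving
average. -/

section ShiftInsert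

variable {n k : ℕ} [NeZero k]

lemma sFold_append_singleton (L : List (Fin n × ℝ)) (a : Fin n × ℝ) :
    sFold n k (L ++ [a]) = shiftInsert (sFold n k L) a := by
  simp [sFold, List.foldl_append]

lemma shiftInsert_apply_self_zero (s : Fin n × Fin k → ℝ) (j : Fin n) (e : ℝ) :
    shiftInsert s (j, e) (j, 0) = e := by
  simp [shiftInsert]

lemma shiftInsert_apply_self_of_ne_zero (s : Fin n × Fin k → ℝ) (j : Fin n) (e : ℝ)
    {r : Fin k} (hr : r ≠ 0) :
    shiftInsert s (j, e) (j, r) = s (j, r - 1) := by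
  simp [shiftInsert, hr]

lemma shiftInsert_apply_of_ne (s : Fin n × Fin k → ℝ) {i j : Fin n} (e : ℝ) (hij : i ≠ j)
    (r : Fin k) :
    shiftInsert s (i, e) (j, r) = s (j, r) := by
  simp [shiftInsert, hij.symm]

end ShiftInsert

section Features

variable {n : ℕ} (L : List (Fin n × ℝ)) (j : Fin n)

lemma countDest_append_self (e : ℝ) : countDest j (L ++ [(j, e)]) = countDest j L + 1 := by
  simp [countDest]

lemma countDest_append_of_ne {i : Fin n} (e : ℝ) (hij : i ≠ j) :
    countDest j (L ++ [(i, e)]) = countDest j L := by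
  simp [countDest, hij]

lemma featAt_append_of_le (a : Fin n × ℝ) {l : ℕ} (hl : l ≤ countDest j L) :
    featAt j (L ++ [a]) l = featAt j L l := by
  cases l with
  | zero => rfl
  | succ m =>
    simp only [featAt, List.filter_append, List.map_append]
    rw [List.getD_append]
    simpa [countDest] using hl

lemma featAt_append_self (e : ℝ) :
    featAt j (L ++ [(j, e)]) (countDest j L + 1) = e := by
  simp [featAt, countDest, List.getD_eq_getElem?_getD]

end Features

theorem sFold_apply {n k : ℕ} [NeZero k] (L : List (Fin n × ℝ)) (j : Fin n) (r : Fin k) :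
    sFold n k L (j, r) = featAt j L (countDest j L - r) := by
  induction L using List.reverseRecOn generalizing r with
  | nil => simp [sFold, countDest, featAt]
  | append_singleton L a ih =>
    obtain ⟨i, e⟩ := a
    rw [sFold_append_singleton]
    by_cases hij : i = j
    · subst hij
      rw [countDest_append_self]
      by_cases hr : r = 0
      · subst hr
        rw [shiftInsert_apply_self_zero, Fin.val_zero, Nat.sub_zero, featAt_append_self]
      · have hr' : 1 ≤ (r : ℕ) := Nat.one_le_iff_ne_zero.mpr (Fin.val_ne_zero_iff.mpr hr)
        rw [shiftInsert_apply_self_of_ne_zero _ _ _ hr, ih, Fin.val_sub_one_of_ne_zero hr,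
          featAt_append_of_le _ _ _ (by omega)]
        congr 1
        omega
    · rw [shiftInsert_apply_of_ne _ _ hij, ih, countDest_append_of_ne _ _ _ hij,
        featAt_append_of_le _ _ _ (Nat.sub_le _ _)]

theorem sFold_moving_average_general (n k : ℕ) [NeZero k]
    (L : List (Fin n × ℝ)) (j : Fin n) :
    (1 / (k : ℝ)) * ∑ r : Fin k, sFold n k L (j, r)
      = (1 / (k : ℝ)) * ∑ x ∈ Finset.range k, featAt j L (countDest j L - x) := by
  rw [← Fin.sum_univ_eq_sum_range (fun x => featAt j L (countDest j L - x)) k]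
  simp only [sFold_apply]

/-- **Theorem 3, moving-average case.** For every event list `L`
and every `j`, the averaged block of the folded memory equals the order-`k`
moving average (with zero padding) of the event features sent to `j`. -/
theorem sFold_moving_average (n k : ℕ) [NeZero n] [NeZero k]
    (L : List (Fin n × ℝ)) (j : Fin n) :
    (1 / (k : ℝ)) * ∑ r : Fin k, sFold n k L (j, r)
      = (1 / (k : ℝ)) * ∑ x ∈ Finset.range k, featAt j L (countDest j L - x) :=
  sFold_moving_average_general n k L j
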